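/- arXiv:math/0610433 — 2 statements merged into one kernel-verified Lean document; each statement's English description precedes it below -/
import Mathlib

section
/- Let K be a field, let q ∈ K be nonzero, let n ≥ 0, and let s₁,…,sₙ ∈ K satisfy sᵢ ≠ q²·s_j for all i ≠ j. Then for every function g of n variables in K, the q⁻¹-symmetrization of g equals a prefactor times the q-symmetrization of the reversed function: Sym̃ⁿ g(s₁,…,sₙ) = (∏_{1≤i<j≤n} (q·sᵢ − q⁻¹·s_j)/(q⁻¹·sᵢ − q·s_j)) · Sym̄ⁿ ĝ(s₁,…,sₙ), where ĝ(x₁,…,xₙ) := g(xₙ,…,x₁). -/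
open Finset

/-- The `q`-symmetrization of a function `F` of `n` variables:
`Sym̄ⁿ F(t₁,…,tₙ) = Σ_σ (∏_{ℓ<ℓ', σ(ℓ)>σ(ℓ')}
  (q⁻¹·t_{σ(ℓ')} − q·t_{σ(ℓ)})/(q·t_{σ(ℓ')} − q⁻¹·t_{σ(ℓ)})) · F(t_{σ(1)},…,t_{σ(n)})`. -/
noncomputable def qSym {K : Type*} [Field K] (q : K) {n : ℕ}
    (F : (Fin n → K) → K) (t : Fin n → K) : K :=
  ∑ σ : Equiv.Perm (Fin n),
    (∏ p ∈ Finset.univ.filter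
        (fun p : Fin n × Fin n => p.1 < p.2 ∧ σ p.2 < σ p.1),
      (q⁻¹ * t (σ p.2) - q * t (σ p.1)) / (q * t (σ p.2) - q⁻¹ * t (σ p.1))) *
    F (fun i => t (σ i))

/-- The `q⁻¹`-symmetrization of a function `g` of `n` variables:
`Sym̃ⁿ g(s₁,…,sₙ) = Σ_ν (∏_{ℓ<ℓ', ν⁻¹(ℓ)>ν⁻¹(ℓ')}
  (q·s_ℓ − q⁻¹·s_{ℓ'})/(q⁻¹·s_ℓ − q·s_{ℓ'})) · g(s_{ν(1)},…,s_{ν(n)})`. -/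
noncomputable def qInvSym {K : Type*} [Field K] (q : K) {n : ℕ}
    (g : (Fin n → K) → K) (s : Fin n → K) : K :=
  ∑ ν : Equiv.Perm (Fin n),
    (∏ p ∈ Finset.univ.filter
        (fun p : Fin n × Fin n => p.1 < p.2 ∧ ν⁻¹ p.2 < ν⁻¹ p.1),
      (q * s p.1 - q⁻¹ * s p.2) / (q⁻¹ * s p.1 - q * s p.2)) *
    g (fun i => s (ν i))

/-!
Write `A a b = (q·s_a − q⁻¹·s_b)/(q⁻¹·s_a − q·s_b)`. Reindexing `Sym̄` by `σ = ν ∘ rev`, the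
factor of `Sym̄` at `σ` is `∏ (A a b)⁻¹` over the pairs `a < b` that `ν⁻¹` keeps in order, and its
argument `ĝ(s ∘ σ)` is `g(s ∘ ν)`; the factor of `Sym̃` at `ν` is `∏ A a b` over the pairs `a < b`
that `ν⁻¹` inverts. The prefactor is the product of `A a b` over all pairs `a < b`, i.e. of these
two products, and `sᵢ ≠ q²·s_j` makes every `A a b` nonzero, so the two sums agree term by term.
-/

section InversionProducts

variable {α M : Type*} [Fintype α] [LinearOrder α] [CommMonoid M]

theorem prod_lt_pairs_eq_prod_inversions_mul_prod_nonInversions {β : Type*} [LinearOrder β]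
    {ν : α → β} (hν : Function.Injective ν) (f : α × α → M) :
    ∏ p ∈ univ.filter (fun p : α × α => p.1 < p.2), f p =
      (∏ p ∈ univ.filter (fun p : α × α => p.1 < p.2 ∧ ν p.2 < ν p.1), f p) *
        ∏ p ∈ univ.filter (fun p : α × α => p.1 < p.2 ∧ ν p.1 < ν p.2), f p := by
  rw [← prod_filter_mul_prod_filter_not _ (fun p : α × α => ν p.2 < ν p.1),
    filter_filter, filter_filter]
  congr 2
  refine filter_congr fun p _ => and_congr_right fun hp => ?_
  rw [not_lt, le_iff_lt_or_eq, or_iff_left (hν.ne hp.ne)]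

theorem prod_inversions_comp_eq_prod_inversions_inv (σ : Equiv.Perm α) (φ : α → α → M) :
    ∏ p ∈ univ.filter (fun p : α × α => p.1 < p.2 ∧ σ p.2 < σ p.1), φ (σ p.2) (σ p.1) =
      ∏ p ∈ univ.filter (fun p : α × α => p.1 < p.2 ∧ σ⁻¹ p.2 < σ⁻¹ p.1), φ p.1 p.2 := by
  refine prod_nbij' (fun p => (σ p.2, σ p.1)) (fun p => (σ⁻¹ p.2, σ⁻¹ p.1)) ?_ ?_ ?_ ?_ ?_ <;>
    simp +contextual

end InversionProducts

theorem prod_inversions_mul_revPerm {M : Type*} [CommMonoid M] {n : ℕ} (ν : Equiv.Perm (Fin n))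
    (φ : Fin n → Fin n → M) :
    ∏ p ∈ univ.filter (fun p : Fin n × Fin n => p.1 < p.2 ∧
        (ν * Fin.revPerm : Equiv.Perm (Fin n)) p.2 < (ν * Fin.revPerm : Equiv.Perm (Fin n)) p.1),
      φ ((ν * Fin.revPerm : Equiv.Perm (Fin n)) p.2) ((ν * Fin.revPerm : Equiv.Perm (Fin n)) p.1) =
      ∏ p ∈ univ.filter (fun p : Fin n × Fin n => p.1 < p.2 ∧ ν⁻¹ p.1 < ν⁻¹ p.2), φ p.1 p.2 := by
  rw [prod_inversions_comp_eq_prod_inversions_inv]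
  refine prod_congr (filter_congr fun p _ => ?_) fun _ _ => rfl
  simp [mul_inv_rev, Fin.rev_lt_rev]

theorem qRatio_ne_zero {K : Type*} [Field K] {q x y : K} (hq : q ≠ 0)
    (hxy : x ≠ q ^ 2 * y) (hyx : y ≠ q ^ 2 * x) :
    (q * x - q⁻¹ * y) / (q⁻¹ * x - q * y) ≠ 0 := by
  refine div_ne_zero (fun h => hyx ?_) (fun h => hxy ?_)
  · field_simp at h
    linear_combination -h
  · field_simp at h
    linear_combination h

/-- the `q⁻¹`-symmetrization of `g` equals the prefactor
`∏_{i<j} (q·sᵢ − q⁻¹·s_j)/(q⁻¹·sᵢ − q·s_j)` times the `q`-symmetrization of the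
reversed function `ĝ(x₁,…,xₙ) = g(xₙ,…,x₁)`. -/
theorem qInvSym_eq_prefactor_mul_qSym_rev {K : Type*} [Field K] (q : K) (hq : q ≠ 0)
    (n : ℕ) (s : Fin n → K) (hs : ∀ i j : Fin n, i ≠ j → s i ≠ q ^ 2 * s j)
    (g : (Fin n → K) → K) :
    qInvSym q g s =
      (∏ p ∈ Finset.univ.filter (fun p : Fin n × Fin n => p.1 < p.2),
        (q * s p.1 - q⁻¹ * s p.2) / (q⁻¹ * s p.1 - q * s p.2)) *
      qSym q (fun x => g (fun i => x (Fin.rev i))) s := by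
  set A : Fin n → Fin n → K := fun x y => (q * s x - q⁻¹ * s y) / (q⁻¹ * s x - q * s y)
  rw [qInvSym, qSym, mul_sum]
  refine Fintype.sum_equiv (Equiv.mulRight Fin.revPerm) _ _ fun ν => ?_
  have hfactor_inv : ∀ x y, (q⁻¹ * s x - q * s y) / (q * s x - q⁻¹ * s y) = (A x y)⁻¹ :=
    fun x y => (inv_div _ _).symm
  have hnonInv : ∏ p ∈ univ.filter (fun p : Fin n × Fin n => p.1 < p.2 ∧ ν⁻¹ p.1 < ν⁻¹ p.2),
      A p.1 p.2 ≠ 0 :=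
    prod_ne_zero_iff.2 fun p hp => qRatio_ne_zero hq (hs _ _ (mem_filter.1 hp).2.1.ne)
      (hs _ _ (mem_filter.1 hp).2.1.ne')
  rw [Equiv.coe_mulRight]
  simp only [hfactor_inv]
  rw [prod_inversions_mul_revPerm ν (fun x y => (A x y)⁻¹),
    prod_lt_pairs_eq_prod_inversions_mul_prod_nonInversions (ν⁻¹).injective, prod_inv_distrib,
    mul_assoc, mul_inv_cancel_left₀ hnonInv]
  simp [Fin.rev_rev]
end

section
/- Let K be a field, let q ∈ K be nonzero, let t₁,…,t_b ∈ K be pairwise distinct and satisfy tᵢ ≠ q²·t_m for all i, m ∈ {1,…,b}, and let t, w ∈ K satisfy: t ≠ w; t ≠ q²·tᵢ and w ≠ tᵢ for all i; and t_m ≠ w for all m. Then 1/(t − w) − Σ_{m=1}^{b} φ_{t_m}(t; t₁,…,t_b) · 1/(t_m − w) = (1/(t − w)) · ∏_{i=1}^{b} [ (t − tᵢ)/(w − tᵢ) · (q⁻¹·w − q·tᵢ)/(q⁻¹·t − q·tᵢ) ]. -/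
/-!
With `A(x) = ∏ᵢ (q⁻¹·x − q·tᵢ)`, a polynomial of degree at most `b`, one has
`φ_{tₘ}(t) = ℓₘ(t) · A(tₘ) / A(t)`, where `ℓₘ` is the Lagrange basis polynomial of the nodes
`t₁, …, t_b`. Lagrange interpolation of `A` at the `b + 1` nodes `w, t₁, …, t_b` reads
`A(t) = A(w) ∏ᵢ (t − tᵢ)/(w − tᵢ) + ∑ₘ A(tₘ) · (t − w)/(tₘ − w) · ℓₘ(t)`,
and dividing it by `(t − w) · A(t)` gives the identity.
-/

open Finset

/-- The rational function
`φ_{t_m}(t; t₁,…,t_b) = (∏_{i≠m} (t − tᵢ)/(tₘ − tᵢ)) · (∏ᵢ (q⁻¹·tₘ − q·tᵢ)/(q⁻¹·t − q·tᵢ))`. -/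
noncomputable def phi {K : Type*} [Field K] (q : K) {b : ℕ} (tv : Fin b → K)
    (m : Fin b) (t : K) : K :=
  (∏ i ∈ Finset.univ.filter (fun i : Fin b => i ≠ m), (t - tv i) / (tv m - tv i)) *
  (∏ i : Fin b, (q⁻¹ * tv m - q * tv i) / (q⁻¹ * t - q * tv i))

open Polynomial

namespace Finset

variable {ι M : Type*} [Fintype ι] [DecidableEq ι] [CommMonoid M]

theorem prod_univ_erase_none (f : Option ι → M) :
    ∏ o ∈ univ.erase none, f o = ∏ i, f (some i) := by
  rw [show (univ : Finset (Option ι)).erase none = univ.map Function.Embedding.some by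
    ext (_ | _) <;> simp, prod_map]
  rfl

theorem prod_univ_erase_some (f : Option ι → M) (m : ι) :
    ∏ o ∈ univ.erase (some m), f o = f none * ∏ i ∈ univ.erase m, f (some i) := by
  rw [show (univ : Finset (Option ι)).erase (some m) = insertNone (univ.erase m) by
    ext (_ | _) <;> simp, prod_insertNone]

end Finset

theorem Polynomial.natDegree_prod_linear_le {F ι : Type*} [Field F] (s : Finset ι) (a : F)
    (c : ι → F) : (∏ i ∈ s, (C a * X - C (c i))).natDegree ≤ #s :=
  (natDegree_prod_le s _).trans <|
    (sum_le_card_nsmul s _ 1 fun _ _ => by compute_degree).trans_eq (by rw [smul_eq_mul, mul_one])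

namespace Lagrange

variable {F ι : Type*} [Field F] [DecidableEq ι]

theorem eval_basis (s : Finset ι) (v : ι → F) (i : ι) (x : F) :
    (Lagrange.basis s v i).eval x = ∏ j ∈ s.erase i, (x - v j) / (v i - v j) := by
  simp [Lagrange.basis, basisDivisor, eval_prod, div_eq_inv_mul]

theorem eval_eq_sum_of_degree_lt {s : Finset ι} {v : ι → F} (hvs : Set.InjOn v s) {p : F[X]}
    (hp : p.degree < #s) (x : F) :
    p.eval x = ∑ i ∈ s, p.eval (v i) * ∏ j ∈ s.erase i, (x - v j) / (v i - v j) := by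
  conv_lhs => rw [eq_interpolate hvs hp]
  simp [interpolate_apply, eval_finsetSum, eval_basis]

theorem eval_eq_add_sum_of_natDegree_le [Fintype ι] {v : ι → F} (hv : Function.Injective v)
    {w : F} (hw : ∀ i, w ≠ v i) {p : F[X]} (hp : p.natDegree ≤ Fintype.card ι) (x : F) :
    p.eval x = p.eval w * ∏ i, (x - v i) / (w - v i) +
      ∑ m, p.eval (v m) * ((x - w) / (v m - w) * ∏ i ∈ univ.erase m, (x - v i) / (v m - v i)) := by
  have hinj : Function.Injective (fun o : Option ι => o.elim w v) := by
    rintro (_ | i) (_ | j) h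
    · rfl
    · exact absurd h (hw j)
    · exact absurd h.symm (hw i)
    · exact congrArg some (hv h)
  have hdeg : p.degree < #(univ : Finset (Option ι)) := by
    rw [card_univ, Fintype.card_option]
    exact (degree_le_of_natDegree_le hp).trans_lt (by exact_mod_cast Nat.lt_succ_self _)
  rw [eval_eq_sum_of_degree_lt hinj.injOn hdeg, Fintype.sum_option, prod_univ_erase_none]
  simp only [prod_univ_erase_some, Option.elim]

end Lagrange

theorem phi_eq_prod_mul_div {K : Type*} [Field K] (q : K) {b : ℕ} (tv : Fin b → K) (m : Fin b)
    (t : K) :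
    phi q tv m t = (∏ i ∈ univ.erase m, (t - tv i) / (tv m - tv i)) *
      ((∏ i, (q⁻¹ * tv m - q * tv i)) / ∏ i, (q⁻¹ * t - q * tv i)) := by
  rw [phi, filter_ne', ← prod_div_distrib]

theorem phi_kernel_identity_general {K : Type*} [Field K] (q : K) (hq : q ≠ 0) (b : ℕ)
    (tv : Fin b → K)
    (hdist : ∀ i m : Fin b, i ≠ m → tv i ≠ tv m)
    (t w : K) (htw : t ≠ w)
    (ht : ∀ i : Fin b, t ≠ q ^ 2 * tv i)
    (hw : ∀ i : Fin b, w ≠ tv i) :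
    1 / (t - w) - ∑ m : Fin b, phi q tv m t * (1 / (tv m - w)) =
      1 / (t - w) *
        ∏ i : Fin b, ((t - tv i) / (w - tv i) * ((q⁻¹ * w - q * tv i) / (q⁻¹ * t - q * tv i))) := by
  set A : K[X] := ∏ i, (C q⁻¹ * X - C (q * tv i))
  have hA : ∀ x, A.eval x = ∏ i, (q⁻¹ * x - q * tv i) := fun x => by simp [A, eval_prod]
  have hAt : A.eval t ≠ 0 := by
    rw [hA, prod_ne_zero_iff]
    intro i _
    rw [show q⁻¹ * t - q * tv i = q⁻¹ * (t - q ^ 2 * tv i) by field_simp]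
    exact mul_ne_zero (inv_ne_zero hq) (sub_ne_zero.mpr (ht i))
  have htw' : t - w ≠ 0 := sub_ne_zero.mpr htw
  have hinj : Function.Injective tv := fun i j h => by_contra fun hij => hdist i j hij h
  have hdeg : A.natDegree ≤ Fintype.card (Fin b) := natDegree_prod_linear_le univ _ _
  have hinterp := Lagrange.eval_eq_add_sum_of_natDegree_le hinj hw hdeg t
  have hsum : ∑ m, phi q tv m t * (1 / (tv m - w)) =
      (A.eval t - A.eval w * ∏ i, (t - tv i) / (w - tv i)) / ((t - w) * A.eval t) := by
    rw [← eq_sub_of_add_eq' hinterp.symm, sum_div]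
    refine sum_congr rfl fun m _ => ?_
    rw [phi_eq_prod_mul_div, ← hA, ← hA]
    field_simp
  have hratio : ∏ i, (q⁻¹ * w - q * tv i) / (q⁻¹ * t - q * tv i) = A.eval w / A.eval t := by
    rw [prod_div_distrib, hA, hA]
  rw [hsum, prod_mul_distrib, hratio]
  field_simp
  ring

/-- the elementary identity
`1/(t − w) − Σₘ φ_{tₘ}(t; t₁,…,t_b)·1/(tₘ − w)
  = (1/(t − w)) · ∏ᵢ (t − tᵢ)/(w − tᵢ) · (q⁻¹·w − q·tᵢ)/(q⁻¹·t − q·tᵢ)`. -/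
theorem phi_kernel_identity {K : Type*} [Field K] (q : K) (hq : q ≠ 0) (b : ℕ)
    (tv : Fin b → K)
    (hdist : ∀ i m : Fin b, i ≠ m → tv i ≠ tv m)
    (hqt : ∀ i m : Fin b, tv i ≠ q ^ 2 * tv m)
    (t w : K) (htw : t ≠ w)
    (ht : ∀ i : Fin b, t ≠ q ^ 2 * tv i)
    (hw : ∀ i : Fin b, w ≠ tv i)
    (hw' : ∀ m : Fin b, tv m ≠ w) :
    1 / (t - w) - ∑ m : Fin b, phi q tv m t * (1 / (tv m - w)) =
      1 / (t - w) *
        ∏ i : Fin b, ((t - tv i) / (w - tv i) * ((q⁻¹ * w - q * tv i) / (q⁻¹ * t - q * tv i))) :=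
  phi_kernel_identity_general q hq b tv hdist t w htw ht hw
end
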